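/- Let G be a snake graph with sign function f and let P be a perfect matching of G consisting of boundary edges only. If a and b are boundary edges in P that are both north-or-east edges, or both south-or-west edges, then f(a) = f(b); if one of them is a north-or-east edge and the other is a south-or-west edge, then f(a) = −f(b). -/

import Mathlib

/-!
Abstract snake graphs (Canakci–Schiffler, "Snake graph calculus II"), modelled
concretely on the unit square lattice in the plane.

A tile is a unit lattice square; a snake graph is a sequence of tiles, each
subsequent tile lying to the north or to the east of the previous one.
-/

/-- A lattice point in the plane. -/
abbrev Pt : Type := ℤ × ℤ

/-- An edge of the unit square lattice: a base point together with an orientation flag.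
`(p, false)` is the horizontal edge from `p` to `p + (1,0)`;
`(p, true)` is the vertical edge from `p` to `p + (0,1)`. -/
abbrev Edge : Type := Pt × Bool

namespace SnakeCalc

open scoped Classical

noncomputable section

/-- The two endpoints of a lattice edge. -/
def ends (e : Edge) : Finset Pt :=
  {e.1, if e.2 then (e.1.1, e.1.2 + 1) else (e.1.1 + 1, e.1.2)}

/-- Translation of an edge by a vector. -/
def tr (v : Pt) (e : Edge) : Edge := ((e.1.1 + v.1, e.1.2 + v.2), e.2)

/-- Difference of two lattice points. -/
def psub (p q : Pt) : Pt := (p.1 - q.1, p.2 - q.2)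

/-- Rotation of an edge by 180 degrees; the rotation sends the unit square with corners
`(0,0)` and `(1,1)` to the unit square with corners `c - (1,1)` and `c`. -/
def rot (c : Pt) (e : Edge) : Edge :=
  if e.2 then ((c.1 - e.1.1, c.2 - e.1.2 - 1), true)
  else ((c.1 - e.1.1 - 1, c.2 - e.1.2), false)

/-- South edge of the unit tile with southwest corner `p`. -/
def south (p : Pt) : Edge := (p, false)

/-- North edge of the unit tile with southwest corner `p`. -/
def north (p : Pt) : Edge := ((p.1, p.2 + 1), false)

/-- West edge of the unit tile with southwest corner `p`. -/
def west (p : Pt) : Edge := (p, true)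

/-- East edge of the unit tile with southwest corner `p`. -/
def east (p : Pt) : Edge := ((p.1 + 1, p.2), true)

/-- The canonical sign function on lattice edges (signs are booleans): on every unit tile
the north and west edges get the same sign, the south and east edges get the same sign,
and the north and south edges get opposite signs. -/
def canonSign (e : Edge) : Bool :=
  if e.2 then decide ¬((e.1.1 + e.1.2) % 2 = 0) else decide ((e.1.1 + e.1.2) % 2 = 0)

/-- An abstract snake graph with `n + 1 ≥ 1` tiles `G_0, …, G_n`.
`dir i` (for `i < n`) records whether tile `i+1` is glued to the north (`true`)
or to the east (`false`) of tile `i`; the values `dir i` for `i ≥ n` are irrelevant. -/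
structure SnakeGraph where
  n : ℕ
  dir : ℕ → Bool

namespace SnakeGraph

variable (G : SnakeGraph)

/-- The southwest corner of tile `i`. -/
def pos : ℕ → Pt
  | 0 => ((0 : ℤ), (0 : ℤ))
  | i + 1 =>
      if G.dir i then ((pos i).1, (pos i).2 + 1) else ((pos i).1 + 1, (pos i).2)

/-- The four edges of the unit tile with southwest corner `p`. -/
def tileEdges (p : Pt) : Finset Edge := {south p, north p, west p, east p}

/-- The four vertices of the unit tile with southwest corner `p`. -/
def tileVertices (p : Pt) : Finset Pt :=
  {p, (p.1 + 1, p.2), (p.1, p.2 + 1), (p.1 + 1, p.2 + 1)}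

/-- The edge set of the snake graph. -/
def edges : Finset Edge := (Finset.range (G.n + 1)).biUnion fun i => tileEdges (G.pos i)

/-- The vertex set of the snake graph. -/
def vertices : Finset Pt := (Finset.range (G.n + 1)).biUnion fun i => tileVertices (G.pos i)

/-- The interior edge `e_i` shared by the tiles `i` and `i+1` (meaningful for `i < n`). -/
def ie (i : ℕ) : Edge := if G.dir i then north (G.pos i) else east (G.pos i)

/-- The set of interior edges of the snake graph. -/
def interiorEdges : Finset Edge := (Finset.range G.n).image fun i => G.ie i

/-- An edge of `G` which is not an interior edge is a boundary edge. -/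
def IsBoundaryEdge (e : Edge) : Prop := e ∈ G.edges ∧ e ∉ G.interiorEdges

/-- The edges of the tiles `a, a+1, …, b` of `G` (in place). -/
def segEdges (a b : ℕ) : Finset Edge :=
  (Finset.Icc a b).biUnion fun i => tileEdges (G.pos i)

/-- The interior edges of the segment of tiles `a, …, b` of `G`. -/
def segInterior (a b : ℕ) : Finset Edge := (Finset.Ico a b).image fun i => G.ie i

/-- The boundary edges of the segment of tiles `a, …, b` of `G`
(the boundary cycle of the union of these tiles). -/
def segBoundary (a b : ℕ) : Finset Edge := G.segEdges a b \ G.segInterior a b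

/-- `f` is a sign function on `G`: on every tile of `G` the north and the west edge have the
same sign, the south and the east edge have the same sign, and the sign on the north edge is
opposite to the sign on the south edge. -/
def IsSignFunction (f : Edge → Bool) : Prop :=
  ∀ i ≤ G.n,
    f (north (G.pos i)) = f (west (G.pos i)) ∧
    f (south (G.pos i)) = f (east (G.pos i)) ∧
    f (north (G.pos i)) = ! f (south (G.pos i))

/-- `e` is a north edge or an east edge of some tile of `G`. -/
def IsNE (e : Edge) : Prop := ∃ i ≤ G.n, e = north (G.pos i) ∨ e = east (G.pos i)

/-- `e` is a south edge or a west edge of some tile of `G`. -/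
def IsSW (e : Edge) : Prop := ∃ i ≤ G.n, e = south (G.pos i) ∨ e = west (G.pos i)

/-- `P` is a perfect matching of `G`: a set of edges of `G` such that every vertex of `G` is
incident to exactly one edge of `P`. -/
def IsPerfectMatching (P : Finset Edge) : Prop :=
  P ⊆ G.edges ∧ ∀ v ∈ G.vertices, (P.filter fun e => v ∈ ends e).card = 1

/-- The type of perfect matchings of `G`. -/
def Matchings := { P : Finset Edge // G.IsPerfectMatching P }

/-- The segment of tiles `a, …, b` of `G`, as a standalone snake graph (based at the origin). -/
def segment (a b : ℕ) : SnakeGraph := ⟨b - a, fun k => G.dir (a + k)⟩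

/-- The reversed segment of tiles `b, b-1, …, a` of `G`, as a standalone snake graph. -/
def revSegment (a b : ℕ) : SnakeGraph := ⟨b - a, fun k => G.dir (b - 1 - k)⟩

end SnakeGraph

/-- Concatenation of two snake graphs, the first tile of `K` being glued to the last tile
of `H` in direction `d` (`true` = north, `false` = east). -/
def concat (H K : SnakeGraph) (d : Bool) : SnakeGraph :=
  ⟨H.n + 1 + K.n, fun k => if k < H.n then H.dir k else if k = H.n then d else K.dir (k - H.n - 1)⟩

/-- A possibly degenerate snake graph: the zero element, a single edge, or an honest
snake graph. -/
inductive SnakeObj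
  | zero
  | edge
  | graph (G : SnakeGraph)

/-- Perfect matchings of a possibly degenerate snake graph: the zero object has none, the
single edge has exactly one, and a snake graph has its usual perfect matchings. -/
def SnakeObj.Matchings : SnakeObj → Type
  | .zero => Empty
  | .edge => PUnit
  | .graph G => G.Matchings

/-- `G ∖ pred(e)`, where `e` is the first edge among the interior edges `e_j` (`j ≥ a`) of `G`
together with the north-east edges of the last tile whose sign agrees with the sign of the
reference edge `r`: remove all predecessors of `e`.  If no interior edge qualifies, `e` is a
north-east edge of the last tile and the result is a single edge. -/
def SnakeGraph.cutPredFrom (G : SnakeGraph) (a : ℕ) (r : Edge) : SnakeObj :=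
  if h : ∃ j, a ≤ j ∧ j < G.n ∧ canonSign (G.ie j) = canonSign r then
    .graph ⟨G.n - (Nat.find h + 1), fun k => G.dir (Nat.find h + 1 + k)⟩
  else .edge

/-- `G ∖ succ(e)`, where `e` is the last edge among the south-west edges of the first tile
together with the interior edges of `G` whose sign agrees with the sign of `r`. -/
def SnakeGraph.cutSuccAt (G : SnakeGraph) (r : Edge) : SnakeObj :=
  if _ : ∃ j, j < G.n ∧ canonSign (G.ie j) = canonSign r then
    .graph ⟨Nat.findGreatest (fun j => j < G.n ∧ canonSign (G.ie j) = canonSign r) G.n, G.dir⟩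
  else .edge

/-- `G ∖ pred(e) ∖ succ(e')`, where `e` is the first edge with sign equal to that of `r` and
`e'` is the last edge with sign equal to that of `r'` (both among interior edges, with the
degenerate conventions of the paper); the result may be zero. -/
def SnakeGraph.cutBothAt (G : SnakeGraph) (r r' : Edge) : SnakeObj :=
  if h : ∃ j, j < G.n ∧ canonSign (G.ie j) = canonSign r then
    if _ : ∃ j, j < G.n ∧ canonSign (G.ie j) = canonSign r' then
      let j₁ := Nat.find h
      let j₂ := Nat.findGreatest (fun j => j < G.n ∧ canonSign (G.ie j) = canonSign r') G.n
      if j₁ < j₂ then .graph ⟨j₂ - (j₁ + 1), fun k => G.dir (j₁ + 1 + k)⟩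
      else if j₁ = j₂ then .edge
      else .zero
    else .zero
  else .zero

end

end SnakeCalc

/-!
Grade lattice points by `level (x, y) = x + y`. Tile `i` has its southwest corner on level `i`,
and every edge joins some level `ℓ` to level `ℓ + 1`. Level `0` consists of the first corner
only, and every level `m + 1 ≤ n + 1` of the two middle corners of tile `m`. Hence a perfect
matching has exactly one edge starting on each level `ℓ ≤ n + 1`: the edge starting on
level `ℓ` covers one vertex of level `ℓ + 1`, so the other one must be covered by an edge
going up.

Boundary edges between two levels run either along the northwest or along the southeast side
of the snake, so consecutive edges of a boundary matching lie on opposite sides. Tracking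
orientations, the orientation of an edge of the matching, shifted by the parity of its tile,
is constant; for the sign function `canonSign` this is the claim, and every sign function
differs from `canonSign` by a global constant.
-/

namespace SnakeCalc

open SnakeGraph

def level (v : Pt) : ℤ := v.1 + v.2

def head (e : Edge) : Pt := if e.2 then (e.1.1, e.1.2 + 1) else (e.1.1 + 1, e.1.2)

lemma mem_ends {v : Pt} {e : Edge} : v ∈ ends e ↔ v = e.1 ∨ v = head e := by
  simp [ends, head]

lemma level_head (e : Edge) : level (head e) = level e.1 + 1 := by
  unfold head level
  split <;> ring

lemma decide_natCast_emod_two_eq_zero (i : ℕ) : decide ((i : ℤ) % 2 = 0) = !i.bodd := by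
  have h := Nat.mod_two_of_bodd i
  cases hb : i.bodd <;> simp only [hb, Bool.toNat_false, Bool.toNat_true] at h <;> simp <;> omega

lemma decide_add_one_emod_two_eq_zero (z : ℤ) :
    decide ((z + 1) % 2 = 0) = !decide (z % 2 = 0) := by
  rcases Int.emod_two_eq_zero_or_one z with h | h <;> simp [h, Int.add_emod]

lemma canonSign_eq_xor (e : Edge) : canonSign e = xor e.2 (decide (level e.1 % 2 = 0)) := by
  unfold canonSign level
  cases e.2 <;> simp only [Bool.false_xor, Bool.true_xor, decide_not, if_true, if_false,
    Bool.false_eq_true]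

lemma canonSign_tile_relations (p : Pt) :
    canonSign (north p) = canonSign (west p) ∧ canonSign (south p) = canonSign (east p) ∧
      canonSign (north p) = !canonSign (south p) := by
  have hN : level (north p).1 = level p + 1 := by simp only [north, level]; ring
  have hE : level (east p).1 = level p + 1 := by simp only [east, level]; ring
  simp only [canonSign_eq_xor, hN, hE, decide_add_one_emod_two_eq_zero]
  simp [north, south, west, east]

lemma mem_tileEdges {p : Pt} {e : Edge} :
    e ∈ tileEdges p ↔ e = south p ∨ e = north p ∨ e = west p ∨ e = east p := by
  simp [tileEdges]

lemma level_tail_of_mem_tileEdges {p : Pt} {e : Edge} (he : e ∈ tileEdges p) :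
    level e.1 = level p ∨ level e.1 = level p + 1 := by
  rcases mem_tileEdges.mp he with rfl | rfl | rfl | rfl <;>
    simp [south, north, west, east, level] <;> ring

lemma tail_eq_of_level_eq {p : Pt} {e : Edge} (he : e ∈ tileEdges p) (h : level e.1 = level p) :
    e.1 = p := by
  rcases mem_tileEdges.mp he with rfl | rfl | rfl | rfl <;>
    simp only [south, north, west, east, level] at h ⊢ <;> omega

lemma ends_subset_tileVertices {p : Pt} {e : Edge} (he : e ∈ tileEdges p) :
    ends e ⊆ tileVertices p := by
  rcases mem_tileEdges.mp he with rfl | rfl | rfl | rfl <;>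
    simp [ends, tileVertices, south, north, west, east, Finset.insert_subset_iff]

lemma canonSign_of_north_or_east {p : Pt} {i : ℕ} {e : Edge} (hp : level p = i)
    (he : e = north p ∨ e = east p) : canonSign e = xor e.2 i.bodd := by
  have h : level e.1 = ((i + 1 : ℕ) : ℤ) := by
    rcases he with rfl | rfl <;> simp only [north, east, level] at hp ⊢ <;> push_cast <;> omega
  rw [canonSign_eq_xor, h, decide_natCast_emod_two_eq_zero, Nat.bodd_succ, Bool.not_not]

lemma canonSign_of_south_or_west {p : Pt} {i : ℕ} {e : Edge} (hp : level p = i)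
    (he : e = south p ∨ e = west p) : canonSign e = !xor e.2 i.bodd := by
  have h : level e.1 = i := by rcases he with rfl | rfl <;> exact hp
  rw [canonSign_eq_xor, h, decide_natCast_emod_two_eq_zero, Bool.xor_not]

lemma xor_canonSign_eq_of_mem_tileEdges {f : Edge → Bool} {p : Pt}
    (hf : f (north p) = f (west p) ∧ f (south p) = f (east p) ∧ f (north p) = !f (south p))
    {e : Edge} (he : e ∈ tileEdges p) :
    xor (f e) (canonSign e) = xor (f (south p)) (canonSign (south p)) := by
  obtain ⟨hNW, hSE, hNS⟩ := hf
  obtain ⟨cNW, cSE, cNS⟩ := canonSign_tile_relations p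
  rcases mem_tileEdges.mp he with rfl | rfl | rfl | rfl
  · rfl
  · rw [hNS, cNS, Bool.not_xor_not]
  · rw [← hNW, ← cNW, hNS, cNS, Bool.not_xor_not]
  · rw [← hSE, ← cSE]

namespace SnakeGraph

variable (G : SnakeGraph)

lemma pos_succ (i : ℕ) : G.pos (i + 1) =
    if G.dir i then ((G.pos i).1, (G.pos i).2 + 1) else ((G.pos i).1 + 1, (G.pos i).2) := rfl

lemma level_pos (i : ℕ) : level (G.pos i) = i := by
  induction i with
  | zero => rfl
  | succ i ih =>
    rw [pos_succ]
    unfold level at ih ⊢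
    split <;> push_cast <;> omega

variable {G}

lemma mem_edges {e : Edge} : e ∈ G.edges ↔ ∃ i ≤ G.n, e ∈ tileEdges (G.pos i) := by
  simp [edges]

lemma mem_vertices {v : Pt} : v ∈ G.vertices ↔ ∃ i ≤ G.n, v ∈ tileVertices (G.pos i) := by
  simp [vertices]

lemma level_tail_of_mem_tileEdges_pos {i : ℕ} {e : Edge} (he : e ∈ tileEdges (G.pos i)) :
    level e.1 = i ∨ level e.1 = i + 1 :=
  G.level_pos i ▸ level_tail_of_mem_tileEdges he

lemma ie_mem_interiorEdges {i : ℕ} (hi : i < G.n) : G.ie i ∈ G.interiorEdges :=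
  Finset.mem_image_of_mem _ (Finset.mem_range.mpr hi)

lemma ie_mem_tileEdges (i : ℕ) :
    G.ie i ∈ tileEdges (G.pos i) ∧ G.ie i ∈ tileEdges (G.pos (i + 1)) := by
  unfold ie
  rw [pos_succ]
  cases G.dir i <;> simp [tileEdges, north, south, east, west]

lemma ends_subset_vertices {e : Edge} (he : e ∈ G.edges) : ends e ⊆ G.vertices := by
  obtain ⟨i, hi, hei⟩ := mem_edges.mp he
  exact fun v hv => mem_vertices.mpr ⟨i, hi, ends_subset_tileVertices hei hv⟩

variable (G)

def midVertex (m : ℕ) (s : Bool) : Pt :=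
  if s then ((G.pos m).1 + 1, (G.pos m).2) else ((G.pos m).1, (G.pos m).2 + 1)

lemma level_midVertex (m : ℕ) (s : Bool) : level (G.midVertex m s) = m + 1 := by
  have := G.level_pos m
  unfold midVertex level at *
  cases s <;> simp <;> omega

lemma midVertex_injective (m : ℕ) : Function.Injective (G.midVertex m) := by
  intro s t h
  cases s <;> cases t <;> simp_all [midVertex, Prod.ext_iff]

variable {G}

lemma midVertex_mem_vertices {m : ℕ} (hm : m ≤ G.n) (s : Bool) :
    G.midVertex m s ∈ G.vertices :=
  mem_vertices.mpr ⟨m, hm, by cases s <;> simp [midVertex, tileVertices]⟩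

lemma exists_midVertex_eq {v : Pt} {m : ℕ} (hv : v ∈ G.vertices) (hlev : level v = m + 1) :
    ∃ s, v = G.midVertex m s := by
  obtain ⟨j, -, hvj⟩ := mem_vertices.mp hv
  have hj := G.level_pos j
  simp only [tileVertices, Finset.mem_insert, Finset.mem_singleton] at hvj
  unfold level at hj hlev
  rcases hvj with rfl | rfl | rfl | rfl
  · obtain rfl : j = m + 1 := by omega
    rw [pos_succ]
    cases G.dir m
    · exact ⟨true, by simp [midVertex]⟩
    · exact ⟨false, by simp [midVertex]⟩
  · obtain rfl : j = m := by simp at hlev; omega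
    exact ⟨true, rfl⟩
  · obtain rfl : j = m := by simp at hlev; omega
    exact ⟨false, rfl⟩
  · obtain rfl : m = j + 1 := by simp at hlev; omega
    simp only [midVertex, pos_succ]
    cases G.dir j
    · exact ⟨false, by simp⟩
    · exact ⟨true, by simp⟩

lemma IsSignFunction.exists_eq_xor_canonSign {f : Edge → Bool} (hf : G.IsSignFunction f) :
    ∃ k, ∀ e ∈ G.edges, f e = xor (canonSign e) k := by
  set k := xor (f (south (G.pos 0))) (canonSign (south (G.pos 0)))
  have htile : ∀ i ≤ G.n, ∀ e ∈ tileEdges (G.pos i), xor (f e) (canonSign e) = k := by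
    intro i
    induction i with
    | zero => exact fun h0 e he => xor_canonSign_eq_of_mem_tileEdges (hf 0 h0) he
    | succ i ih =>
      intro hi e he
      obtain ⟨hie, hie'⟩ := G.ie_mem_tileEdges i
      rw [xor_canonSign_eq_of_mem_tileEdges (hf _ hi) he,
        ← xor_canonSign_eq_of_mem_tileEdges (hf _ hi) hie', ih (by omega) _ hie]
  refine ⟨k, fun e he => ?_⟩
  obtain ⟨i, hi, hei⟩ := mem_edges.mp he
  rw [← htile i hi e hei, Bool.xor_comm (f e), ← Bool.xor_assoc, Bool.xor_self, Bool.false_xor]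

/- A boundary edge runs along the northwest side (`s = false`) or the southeast side
(`s = true`) of the snake; the side and the level fix its orientation. -/
lemma xor_bodd_of_head_eq_midVertex {i m : ℕ} {s : Bool} {e : Edge} (hm : m ≤ G.n)
    (he : e ∈ tileEdges (G.pos i)) (hbd : e ∉ G.interiorEdges) (h : head e = G.midVertex m s) :
    xor e.2 i.bodd = xor (m + 1).bodd s := by
  have hlev := congrArg level h
  rw [level_head, level_midVertex] at hlev
  rcases level_tail_of_mem_tileEdges_pos he with ht | ht <;> rw [ht] at hlev
  · obtain rfl : i = m := by omega
    rcases mem_tileEdges.mp he with rfl | rfl | rfl | rfl <;> cases s <;>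
      simp_all [head, midVertex, south, north, west, east, level, Prod.ext_iff]
  · obtain rfl : m = i + 1 := by omega
    have hie : e ≠ G.ie i := fun h => hbd (h ▸ G.ie_mem_interiorEdges (by omega))
    rcases mem_tileEdges.mp he with rfl | rfl | rfl | rfl <;> cases s <;> cases hd : G.dir i <;>
      simp_all [head, midVertex, pos_succ, ie, south, north, west, east, level, Prod.ext_iff]

lemma xor_bodd_of_tail_eq_midVertex {i m : ℕ} {s : Bool} {e : Edge} (hi : i ≤ G.n)
    (he : e ∈ tileEdges (G.pos i)) (hbd : e ∉ G.interiorEdges) (h : e.1 = G.midVertex m s) :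
    xor e.2 i.bodd = xor m.bodd s := by
  have hlev := congrArg level h
  rw [level_midVertex] at hlev
  rcases level_tail_of_mem_tileEdges_pos he with ht | ht <;> rw [ht] at hlev
  · obtain rfl : i = m + 1 := by omega
    have hie : e ≠ G.ie m := fun h => hbd (h ▸ G.ie_mem_interiorEdges (by omega))
    rcases mem_tileEdges.mp he with rfl | rfl | rfl | rfl <;> cases s <;> cases hd : G.dir m <;>
      simp_all [midVertex, pos_succ, ie, south, north, west, east, level, Prod.ext_iff]
  · obtain rfl : m = i := by omega
    rcases mem_tileEdges.mp he with rfl | rfl | rfl | rfl <;> cases s <;>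
      simp_all [midVertex, south, north, west, east, level, Prod.ext_iff]

/-- By `canonSign_of_north_or_east` and `canonSign_of_south_or_west`, this says that
`canonSign e` is `c` if `e` is a north or east edge, and `!c` if it is a south or west edge. -/
def HasParity (c : Bool) (e : Edge) : Prop :=
  ∀ i ≤ G.n, e ∈ tileEdges (G.pos i) → xor e.2 i.bodd = c

end SnakeGraph

def edgesAtLevel (P : Finset Edge) (L : ℤ) : Finset Edge := P.filter fun e => level e.1 = L

lemma mem_edgesAtLevel {P : Finset Edge} {L : ℤ} {e : Edge} :
    e ∈ edgesAtLevel P L ↔ e ∈ P ∧ level e.1 = L :=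
  Finset.mem_filter

namespace SnakeGraph.IsPerfectMatching

variable {G : SnakeGraph} {P : Finset Edge}

lemma exists_mem_ends (hP : G.IsPerfectMatching P) {v : Pt} (hv : v ∈ G.vertices) :
    ∃ e ∈ P, v ∈ ends e := by
  obtain ⟨e, he⟩ := Finset.card_pos.mp (hP.2 v hv ▸ Nat.one_pos)
  exact ⟨e, (Finset.mem_filter.mp he).1, (Finset.mem_filter.mp he).2⟩

lemma eq_of_mem_ends (hP : G.IsPerfectMatching P) {v : Pt} {e e' : Edge} (he : e ∈ P)
    (he' : e' ∈ P) (hv : v ∈ ends e) (hv' : v ∈ ends e') : e = e' :=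
  Finset.card_le_one.mp (hP.2 v (ends_subset_vertices (hP.1 he) hv)).le e
    (Finset.mem_filter.mpr ⟨he, hv⟩) e' (Finset.mem_filter.mpr ⟨he', hv'⟩)

lemma exists_edgesAtLevel_zero (hP : G.IsPerfectMatching P) :
    ∃ e, edgesAtLevel P 0 = {e} ∧ G.HasParity e.2 e := by
  obtain ⟨e, heP, hve⟩ := hP.exists_mem_ends (v := G.pos 0)
    (mem_vertices.mpr ⟨0, Nat.zero_le _, by simp [tileVertices]⟩)
  have htail : ∀ x ∈ P, level x.1 = 0 → x.1 = G.pos 0 := by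
    intro x hxP hx
    obtain ⟨j, -, hxj⟩ := mem_edges.mp (hP.1 hxP)
    obtain rfl : j = 0 := by have := level_tail_of_mem_tileEdges_pos hxj; omega
    exact tail_eq_of_level_eq hxj (by rw [hx, level_pos]; rfl)
  have he0 : level e.1 = 0 := by
    obtain ⟨j, -, hej⟩ := mem_edges.mp (hP.1 heP)
    have hj := level_tail_of_mem_tileEdges_pos hej
    have h0 := G.level_pos 0
    rcases mem_ends.mp hve with h | h <;> rw [h] at h0
    · exact h0
    · rw [level_head] at h0
      omega
  refine ⟨e, Finset.eq_singleton_iff_unique_mem.mpr ⟨mem_edgesAtLevel.mpr ⟨heP, he0⟩,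
    fun x hx => ?_⟩, fun i _ hei => ?_⟩
  · obtain ⟨hxP, hx⟩ := mem_edgesAtLevel.mp hx
    exact hP.eq_of_mem_ends hxP heP (mem_ends.mpr (.inl rfl))
      (mem_ends.mpr (.inl ((htail x hxP hx).trans (htail e heP he0).symm)))
  · obtain rfl : i = 0 := by have := level_tail_of_mem_tileEdges_pos hei; omega
    simp

lemma exists_edgesAtLevel_succ (hP : G.IsPerfectMatching P)
    (hbd : ∀ e ∈ P, e ∉ G.interiorEdges) {L : ℕ} (hL : L ≤ G.n) {e : Edge}
    (h : edgesAtLevel P L = {e}) :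
    ∃ e', edgesAtLevel P (L + 1 : ℕ) = {e'} ∧ ∀ c, G.HasParity c e → G.HasParity c e' := by
  obtain ⟨heP, heL⟩ := mem_edgesAtLevel.mp (h ▸ Finset.mem_singleton_self e)
  obtain ⟨s, hs⟩ := exists_midVertex_eq
    (ends_subset_vertices (hP.1 heP) (mem_ends.mpr (.inr rfl))) (by rw [level_head, heL])
  obtain ⟨e', he'P, hve'⟩ := hP.exists_mem_ends (midVertex_mem_vertices hL (!s))
  have htail : e'.1 = G.midVertex L (!s) := by
    rcases mem_ends.mp hve' with h' | h'
    · exact h'.symm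
    have he' : e' = e := by
      rw [← Finset.mem_singleton, ← h, mem_edgesAtLevel]
      refine ⟨he'P, ?_⟩
      have := congrArg level h'
      rw [level_head, level_midVertex] at this
      omega
    subst he'
    rw [hs] at h'
    exact (Bool.not_ne_self s (midVertex_injective G L h')).elim
  refine ⟨e', Finset.eq_singleton_iff_unique_mem.mpr ⟨?_, fun x hx => ?_⟩, ?_⟩
  · rw [mem_edgesAtLevel, htail, level_midVertex]
    exact ⟨he'P, by push_cast; rfl⟩
  · obtain ⟨hxP, hxL⟩ := mem_edgesAtLevel.mp hx
    obtain ⟨t, ht⟩ := exists_midVertex_eq (ends_subset_vertices (hP.1 hxP)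
      (mem_ends.mpr (.inl rfl))) (by rw [hxL]; push_cast; rfl)
    rcases Bool.eq_or_eq_not t s with rfl | rfl
    · obtain rfl := hP.eq_of_mem_ends hxP heP (mem_ends.mpr (.inl rfl))
        (mem_ends.mpr (.inr (ht.trans hs.symm)))
      push_cast at hxL
      omega
    · exact hP.eq_of_mem_ends hxP he'P (mem_ends.mpr (.inl rfl))
        (mem_ends.mpr (.inl (ht.trans htail.symm)))
  · intro c hc i hi hei
    obtain ⟨j, hj, hej⟩ := mem_edges.mp (hP.1 heP)
    rw [xor_bodd_of_tail_eq_midVertex hi hei (hbd _ he'P) htail, ← hc j hj hej,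
      xor_bodd_of_head_eq_midVertex hL hej (hbd _ heP) hs]
    simp

theorem exists_hasParity (hP : G.IsPerfectMatching P) (hbd : ∀ e ∈ P, e ∉ G.interiorEdges) :
    ∃ c, ∀ e ∈ P, G.HasParity c e := by
  obtain ⟨e₀, he₀, hpar₀⟩ := hP.exists_edgesAtLevel_zero
  have key : ∀ L ≤ G.n + 1, ∃ e, edgesAtLevel P L = {e} ∧ G.HasParity e₀.2 e := by
    intro L
    induction L with
    | zero => exact fun _ => ⟨e₀, he₀, hpar₀⟩
    | succ L ih =>
      intro hL
      obtain ⟨e, he, hpar⟩ := ih (by omega)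
      obtain ⟨e', he', hpar'⟩ := hP.exists_edgesAtLevel_succ hbd (by omega) he
      exact ⟨e', he', hpar' _ hpar⟩
  refine ⟨e₀.2, fun e heP => ?_⟩
  obtain ⟨j, hj, hej⟩ := mem_edges.mp (hP.1 heP)
  obtain ⟨L, hL, hlev⟩ : ∃ L ≤ G.n + 1, level e.1 = L := by
    rcases level_tail_of_mem_tileEdges_pos hej with h | h
    · exact ⟨j, by omega, h⟩
    · exact ⟨j + 1, by omega, by rw [h]; push_cast; rfl⟩
  obtain ⟨e', he', hpar⟩ := key L hL
  have : e ∈ edgesAtLevel P L := mem_edgesAtLevel.mpr ⟨heP, hlev⟩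
  rw [he', Finset.mem_singleton] at this
  rwa [this]

end SnakeGraph.IsPerfectMatching

/-- Lemma on signs of boundary matchings, parts (1) and (2).
Let `G` be a snake graph with sign function `f` and let `P` be a perfect matching of `G`
consisting of boundary edges only.  If `a, b ∈ P` are both north-or-east edges, or both
south-or-west edges, then `f a = f b`; if one of them is a north-or-east edge and the other
a south-or-west edge, then `f a = ! f b`. -/
theorem sign_of_boundary_matching (G : SnakeGraph) (f : Edge → Bool)
    (hf : G.IsSignFunction f) (P : Finset Edge)
    (hP : G.IsPerfectMatching P) (hbd : ∀ e ∈ P, G.IsBoundaryEdge e)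
    (a b : Edge) (ha : a ∈ P) (hb : b ∈ P) :
    (((G.IsNE a ∧ G.IsNE b) ∨ (G.IsSW a ∧ G.IsSW b)) → f a = f b) ∧
    ((G.IsNE a ∧ G.IsSW b) → f a = ! f b) := by
  obtain ⟨k, hk⟩ := hf.exists_eq_xor_canonSign
  obtain ⟨c, hc⟩ := hP.exists_hasParity fun e he => (hbd e he).2
  have hNE : ∀ e ∈ P, G.IsNE e → f e = xor c k := by
    rintro e he ⟨i, hi, hne⟩
    rw [hk e (hP.1 he), canonSign_of_north_or_east (G.level_pos i) hne,
      hc e he i hi (by rcases hne with rfl | rfl <;> simp [tileEdges])]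
  have hSW : ∀ e ∈ P, G.IsSW e → f e = xor (!c) k := by
    rintro e he ⟨i, hi, hsw⟩
    rw [hk e (hP.1 he), canonSign_of_south_or_west (G.level_pos i) hsw,
      hc e he i hi (by rcases hsw with rfl | rfl <;> simp [tileEdges])]
  refine ⟨?_, fun ⟨haNE, hbSW⟩ => ?_⟩
  · rintro (⟨haNE, hbNE⟩ | ⟨haSW, hbSW⟩)
    · rw [hNE a ha haNE, hNE b hb hbNE]
    · rw [hSW a ha haSW, hSW b hb hbSW]
  · rw [hNE a ha haNE, hSW b hb hbSW, Bool.not_xor, Bool.not_not]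

end SnakeCalc
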